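/- A right stochastic matrix A reaches consensus, i.e., for every x ∈ R^N, max_{i,j} |(A^t x)_i − (A^t x)_j| → 0 as t → ∞, if and only if |λ₂(A)| < 1, where λ₂(A) is the second-largest eigenvalue of A in absolute value. -/

import Mathlib

/-!
Since the rows of `A` sum to one, `A` fixes the constant vectors and acts on `ℝᴺ` modulo
constants through a matrix `C` of size `N - 1`; in the coordinates `xᵢ - x_{N-1}` this is
`A` in block triangular form with diagonal blocks `C` and `1`. Hence the characteristic
polynomial of `A` is `(X - 1) χ_C`, so `|λ₂(A)|` is the spectral radius of `C`. On the other
hand the spread `maxᵢⱼ |xᵢ - xⱼ|` is within a factor two of the sup norm of the coordinates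
`xᵢ - x_{N-1}`, so consensus says exactly that `Cᵗ → 0`. By Gelfand's formula, `Cᵗ → 0` iff the
spectral radius of `C` is less than one.
-/

open Matrix Filter

def IsStochastic {N : ℕ} (A : Matrix (Fin N) (Fin N) ℝ) : Prop :=
  (∀ i j, 0 ≤ A i j) ∧ ∀ i, ∑ j, A i j = 1

/-- `|λ₂(A)|`: the largest modulus among the eigenvalues of `A` (with multiplicity)
after removing one copy of the eigenvalue `1`. -/
noncomputable def lam2abs {N : ℕ} (A : Matrix (Fin N) (Fin N) ℝ) : ℝ :=
  ((((A.map (Complex.ofReal ·)).charpoly.roots).erase 1).map fun z => ‖z‖).foldr max 0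

open Polynomial Topology

theorem Multiset.foldr_max_lt_iff {α : Type*} [LinearOrder α] {b c : α} (s : Multiset α) :
    s.foldr max b < c ↔ b < c ∧ ∀ a ∈ s, a < c := by
  induction s using Multiset.induction_on with
  | empty => simp
  | cons a s ih =>
    simp only [Multiset.foldr_cons, max_lt_iff, ih, Multiset.forall_mem_cons]
    tauto

section BanachAlgebra

variable {𝕜 A : Type*} [NormedField 𝕜] [NormedRing A] [NormedAlgebra 𝕜 A] [CompleteSpace A]

theorem spectralRadius_le_nnnorm_mul_nnnorm_one (a : A) :
    spectralRadius 𝕜 a ≤ ‖a‖₊ * ‖(1 : A)‖₊ := by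
  refine iSup₂_le fun k hk => ?_
  rw [← ENNReal.coe_mul, ENNReal.coe_le_coe, ← NNReal.coe_le_coe]
  simpa using spectrum.norm_le_norm_mul_of_mem hk

theorem spectralRadius_lt_one_of_tendsto_pow_atTop_nhds_zero {a : A}
    (h : Tendsto (a ^ ·) atTop (𝓝 0)) : spectralRadius 𝕜 a < 1 := by
  have hsmall : ∀ᶠ t : ℕ in atTop, ‖a ^ t‖ * ‖(1 : A)‖ < 1 := by
    refine (tendsto_order.mp ?_).2 1 one_pos
    simpa using (tendsto_zero_iff_norm_tendsto_zero.mp h).mul_const ‖(1 : A)‖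
  obtain ⟨t, ht, ht1⟩ := (hsmall.and (eventually_ge_atTop 1)).exists
  have hpow : spectralRadius 𝕜 a ^ t < 1 := calc
    spectralRadius 𝕜 a ^ t ≤ spectralRadius 𝕜 (a ^ t) :=
      spectrum.spectralRadius_pow_le a t (by omega)
    _ ≤ ‖a ^ t‖₊ * ‖(1 : A)‖₊ := spectralRadius_le_nnnorm_mul_nnnorm_one _
    _ < 1 := by
      rw [← ENNReal.coe_mul, ENNReal.coe_lt_one_iff, ← NNReal.coe_lt_one]
      simpa using ht
  by_contra! h1
  exact hpow.not_ge (one_le_pow₀ h1)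

variable [NormedAlgebra ℂ A]

theorem tendsto_pow_atTop_nhds_zero_of_spectralRadius_lt_one {a : A}
    (h : spectralRadius ℂ a < 1) : Tendsto (a ^ ·) atTop (𝓝 0) := by
  obtain ⟨r, hρr, hr1⟩ := ENNReal.lt_iff_exists_nnreal_btwn.mp h
  have hr1 : r < 1 := by exact_mod_cast hr1
  have hpow : ∀ᶠ t : ℕ in atTop, ‖a ^ t‖₊ ≤ r ^ t := by
    filter_upwards [(spectrum.pow_nnnorm_pow_one_div_tendsto_nhds_spectralRadius a
      ).eventually_lt_const hρr, eventually_ge_atTop 1] with t ht ht1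
    have := ENNReal.rpow_lt_rpow ht (by positivity : (0 : ℝ) < t)
    rw [← ENNReal.rpow_mul, one_div_mul_cancel (by positivity), ENNReal.rpow_one,
      ENNReal.rpow_natCast, ← ENNReal.coe_pow] at this
    exact_mod_cast this.le
  rw [tendsto_zero_iff_norm_tendsto_zero]
  refine squeeze_zero' (.of_forall fun t => norm_nonneg _) ?_
    (tendsto_pow_atTop_nhds_zero_of_lt_one r.coe_nonneg hr1)
  filter_upwards [hpow] with t ht
  exact_mod_cast ht

theorem tendsto_pow_atTop_nhds_zero_iff_spectralRadius_lt_one (a : A) :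
    Tendsto (a ^ ·) atTop (𝓝 0) ↔ spectralRadius ℂ a < 1 :=
  ⟨spectralRadius_lt_one_of_tendsto_pow_atTop_nhds_zero,
    tendsto_pow_atTop_nhds_zero_of_spectralRadius_lt_one⟩

end BanachAlgebra

namespace Matrix

variable {m n : Type*}

theorem charpoly_fromBlocks_of_mul_add_eq [Fintype m] [Fintype n] [DecidableEq m] [DecidableEq n]
    {R : Type*} [CommRing R] (D : Matrix m m R)
    (c : Matrix m n R) (b : Matrix n m R) (a : Matrix n n R) (w : Matrix m n R)
    (hw : D * w + c = w) (ha : b * w + a = 1) :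
    (fromBlocks D c b a).charpoly = (D - w * b).charpoly * (X - 1) ^ Fintype.card n := by
  let P : (Matrix (m ⊕ n) (m ⊕ n) R)ˣ :=
    { val := fromBlocks 1 (-w) 0 1
      inv := fromBlocks 1 w 0 1
      val_inv := by simp [fromBlocks_multiply, fromBlocks_one]
      inv_val := by simp [fromBlocks_multiply, fromBlocks_one] }
  have hcorner : (D - w * b) * w + (c - w * a) = 0 :=
    calc (D - w * b) * w + (c - w * a) = (D * w + c) - w * (b * w + a) := by
          rw [Matrix.sub_mul, Matrix.mul_add, Matrix.mul_assoc]; abel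
      _ = 0 := by rw [hw, ha, Matrix.mul_one, sub_self]
  have hconj : (P : Matrix (m ⊕ n) (m ⊕ n) R) * fromBlocks D c b a *
      (P : Matrix (m ⊕ n) (m ⊕ n) R)⁻¹ = fromBlocks (D - w * b) 0 b 1 := by
    rw [← Matrix.coe_units_inv]
    simp [P, fromBlocks_multiply, ha, Matrix.neg_mul, ← sub_eq_add_neg, hcorner]
  rw [← charpoly_units_conj P, hconj, charpoly_fromBlocks_zero₁₂, charpoly_one]

theorem spectralRadius_lt_one_iff [Fintype m] [DecidableEq m] (M : Matrix m m ℂ) :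
    spectralRadius ℂ M < 1 ↔ ∀ z ∈ M.charpoly.roots, ‖z‖ < 1 := by
  have hspec : ∀ {z}, z ∈ spectrum ℂ M ↔ z ∈ M.charpoly.roots := by
    simp [mem_spectrum_iff_isRoot_charpoly, (charpoly_monic M).ne_zero]
  refine ⟨fun h z hz => ?_, fun h => ?_⟩
  · have := (le_iSup₂ (f := fun (z : ℂ) (_ : z ∈ spectrum ℂ M) => (‖z‖₊ : ENNReal)) z
      (hspec.mpr hz)).trans_lt h
    exact_mod_cast this
  · calc spectralRadius ℂ M ≤ (M.charpoly.roots.toFinset.sup (‖·‖₊) : NNReal) :=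
          iSup₂_le fun z hz => ENNReal.coe_le_coe.mpr
            (Finset.le_sup (f := (‖·‖₊)) (Multiset.mem_toFinset.mpr (hspec.mp hz)))
      _ < 1 := by
          exact_mod_cast (Finset.sup_lt_iff zero_lt_one).mpr fun z hz => by
            exact_mod_cast h z (Multiset.mem_toFinset.mp hz)

theorem tendsto_pow_atTop_nhds_zero_iff [Fintype m] [DecidableEq m] (M : Matrix m m ℂ) :
    Tendsto (M ^ ·) atTop (𝓝 0) ↔ ∀ z ∈ M.charpoly.roots, ‖z‖ < 1 := by
  -- any submultiplicative norm inducing the entrywise topology will do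
  let _ := Matrix.linftyOpNormedRing (n := m) (α := ℂ)
  let _ := Matrix.linftyOpNormedAlgebra (n := m) (R := ℂ) (α := ℂ)
  rw [← spectralRadius_lt_one_iff]
  exact tendsto_pow_atTop_nhds_zero_iff_spectralRadius_lt_one M

theorem tendsto_nhds_zero_iff_forall_mulVec [Fintype n] [DecidableEq n] {R : Type*} [Semiring R]
    [TopologicalSpace R] [IsTopologicalSemiring R] {α : Type*} {l : Filter α}
    {F : α → Matrix m n R} :
    Tendsto F l (𝓝 0) ↔ ∀ v, Tendsto (fun a => F a *ᵥ v) l (𝓝 0) := by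
  refine ⟨fun h v => ?_, fun h => ?_⟩
  · exact ((continuous_id.matrix_mulVec continuous_const).tendsto' 0 0 (zero_mulVec v)).comp h
  · refine tendsto_pi_nhds.mpr fun i => tendsto_pi_nhds.mpr fun j => ?_
    simpa [mulVec_single_one] using tendsto_pi_nhds.mp (h (Pi.single j 1)) i

theorem tendsto_map_ofReal_nhds_zero_iff {α : Type*} {l : Filter α} {F : α → Matrix m n ℝ} :
    Tendsto (fun a => (F a).map Complex.ofReal) l (𝓝 0) ↔ Tendsto F l (𝓝 0) := by
  refine ⟨fun h => ?_, fun h => ?_⟩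
  · simpa [Function.comp_def] using
      ((continuous_id.matrix_map Complex.continuous_re).tendsto 0).comp h
  · simpa [Function.comp_def] using
      ((continuous_id.matrix_map Complex.continuous_ofReal).tendsto 0).comp h

end Matrix

section Differences

variable {R : Type*} [CommRing R] {n : ℕ}

def diffVec (x : Fin (n + 1) → R) : Fin n → R := fun k => x k.castSucc - x (Fin.last n)

/-- When the rows of `A` sum to one, this is the matrix of the map induced by `A` on vectors
modulo constants, in the coordinates `diffVec`. -/
def diffMatrix (A : Matrix (Fin (n + 1)) (Fin (n + 1)) R) : Matrix (Fin n) (Fin n) R :=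
  of fun k l => A k.castSucc l.castSucc - A (Fin.last n) l.castSucc

@[simp]
theorem diffVec_snoc_zero (y : Fin n → R) : diffVec (Fin.snoc y 0 : Fin (n + 1) → R) = y := by
  ext k; simp [diffVec]

theorem diffMatrix_map {S : Type*} [CommRing S] (f : R →+* S)
    (A : Matrix (Fin (n + 1)) (Fin (n + 1)) R) :
    diffMatrix (A.map f) = (diffMatrix A).map f := by
  ext k l; simp [diffMatrix]

theorem diffVec_mulVec {A : Matrix (Fin (n + 1)) (Fin (n + 1)) R} (hA : ∀ i, ∑ j, A i j = 1)
    (x : Fin (n + 1) → R) : diffVec (A *ᵥ x) = diffMatrix A *ᵥ diffVec x := by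
  have hrow : ∀ i, (A *ᵥ x) i = x (Fin.last n) + ∑ l, A i l.castSucc * diffVec x l := fun i =>
    calc (A *ᵥ x) i = ∑ j, A i j * x (Fin.last n) + ∑ j, A i j * (x j - x (Fin.last n)) := by
          simp only [mulVec, dotProduct, ← Finset.sum_add_distrib, mul_sub, add_sub_cancel]
      _ = _ := by
          rw [← Finset.sum_mul, hA i, one_mul, Fin.sum_univ_castSucc, sub_self, mul_zero,
            add_zero]
          rfl
  ext k
  rw [diffVec, hrow, hrow, add_sub_add_left_eq_sub, ← Finset.sum_sub_distrib]
  simp only [diffMatrix, mulVec, dotProduct, of_apply, sub_mul]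

theorem diffVec_pow_mulVec {A : Matrix (Fin (n + 1)) (Fin (n + 1)) R}
    (hA : ∀ i, ∑ j, A i j = 1) (t : ℕ) (x : Fin (n + 1) → R) :
    diffVec ((A ^ t) *ᵥ x) = diffMatrix A ^ t *ᵥ diffVec x := by
  induction t with
  | zero => simp
  | succ t ih =>
    rw [pow_succ', ← mulVec_mulVec, diffVec_mulVec hA, ih, mulVec_mulVec, ← pow_succ']

theorem charpoly_eq_charpoly_diffMatrix_mul_X_sub_one (A : Matrix (Fin (n + 1)) (Fin (n + 1)) R)
    (hA : ∀ i, ∑ j, A i j = 1) : A.charpoly = (diffMatrix A).charpoly * (X - 1) := by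
  -- `finSumFinEquiv` sends `inl k` and `inr 0` to `Fin.castAdd 1 k` and `Fin.natAdd n 0`,
  -- which are `k.castSucc` and `Fin.last n` only up to `rfl`
  have hsum : ∀ i, ∑ k : Fin n, A i (Fin.castAdd 1 k) + A i (Fin.natAdd n 0) = 1 := fun i => by
    rw [← hA i, Fin.sum_univ_castSucc]; rfl
  set M := reindex finSumFinEquiv.symm finSumFinEquiv.symm A
  set w : Matrix (Fin n) (Fin 1) R := of fun _ _ => 1
  have hw : M.toBlocks₁₁ * w + M.toBlocks₁₂ = w := by
    ext k l; simp [M, w, toBlocks₁₁, toBlocks₁₂, mul_apply, Fin.fin_one_eq_zero l, hsum]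
  have ha : M.toBlocks₂₁ * w + M.toBlocks₂₂ = 1 := by
    ext k l
    obtain rfl := Subsingleton.elim k l
    simp [M, w, toBlocks₂₁, toBlocks₂₂, mul_apply, Fin.fin_one_eq_zero k, hsum]
  have hdiff : M.toBlocks₁₁ - w * M.toBlocks₂₁ = diffMatrix A := by
    ext k l; simp [M, w, toBlocks₁₁, toBlocks₂₁, mul_apply]; rfl
  rw [show A.charpoly = M.charpoly from (charpoly_reindex _ _).symm, ← fromBlocks_toBlocks M,
    charpoly_fromBlocks_of_mul_add_eq _ _ _ _ _ hw ha, hdiff, Fintype.card_fin, pow_one]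

end Differences

section Spread

variable {ι : Type*}

noncomputable def spread (x : ι → ℝ) : ℝ := ⨆ i, ⨆ j, |x i - x j|

theorem abs_sub_le_spread [Finite ι] (x : ι → ℝ) (i j : ι) : |x i - x j| ≤ spread x :=
  (le_ciSup (Set.finite_range _).bddAbove j).trans
    (le_ciSup (f := fun i => ⨆ j, |x i - x j|) (Set.finite_range _).bddAbove i)

theorem spread_nonneg [Finite ι] [Nonempty ι] (x : ι → ℝ) : 0 ≤ spread x := by
  simpa using abs_sub_le_spread x (Classical.arbitrary ι) (Classical.arbitrary ι)

variable {n : ℕ}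

theorem norm_diffVec_le_spread (x : Fin (n + 1) → ℝ) : ‖diffVec x‖ ≤ spread x :=
  (pi_norm_le_iff_of_nonneg (spread_nonneg x)).mpr fun _ => abs_sub_le_spread x _ _

theorem abs_sub_last_le_norm_diffVec (x : Fin (n + 1) → ℝ) (i : Fin (n + 1)) :
    |x i - x (Fin.last n)| ≤ ‖diffVec x‖ := by
  induction i using Fin.lastCases with
  | last => simp
  | cast k => exact norm_le_pi_norm (diffVec x) k

theorem spread_le_two_mul_norm_diffVec (x : Fin (n + 1) → ℝ) : spread x ≤ 2 * ‖diffVec x‖ :=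
  ciSup_le fun i => ciSup_le fun j => calc
    |x i - x j| ≤ |x i - x (Fin.last n)| + |x j - x (Fin.last n)| := by
      rw [abs_sub_comm (x j)]; exact abs_sub_le _ _ _
    _ ≤ 2 * ‖diffVec x‖ := by
      linarith [abs_sub_last_le_norm_diffVec x i, abs_sub_last_le_norm_diffVec x j]

theorem tendsto_spread_iff {α : Type*} {l : Filter α} {u : α → Fin (n + 1) → ℝ} :
    Tendsto (fun a => spread (u a)) l (𝓝 0) ↔ Tendsto (fun a => diffVec (u a)) l (𝓝 0) := by
  rw [tendsto_zero_iff_norm_tendsto_zero (f := fun a => diffVec (u a))]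
  refine ⟨fun h => ?_, fun h => ?_⟩
  · exact squeeze_zero (fun _ => norm_nonneg _) (fun _ => norm_diffVec_le_spread _) h
  · exact squeeze_zero (fun _ => spread_nonneg _) (fun _ => spread_le_two_mul_norm_diffVec _)
      (by simpa using h.const_mul 2)

theorem tendsto_spread_pow_mulVec_iff {A : Matrix (Fin (n + 1)) (Fin (n + 1)) ℝ}
    (hA : ∀ i, ∑ j, A i j = 1) :
    (∀ x, Tendsto (fun t : ℕ => spread ((A ^ t) *ᵥ x)) atTop (𝓝 0)) ↔
      Tendsto (diffMatrix A ^ ·) atTop (𝓝 0) := by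
  simp_rw [tendsto_spread_iff, diffVec_pow_mulVec hA, tendsto_nhds_zero_iff_forall_mulVec]
  exact ⟨fun h y => by simpa using h (Fin.snoc y 0), fun h x => h _⟩

end Spread

theorem lam2abs_lt_one_iff {n : ℕ} {A : Matrix (Fin (n + 1)) (Fin (n + 1)) ℝ}
    (hA : ∀ i, ∑ j, A i j = 1) :
    lam2abs A < 1 ↔ ∀ z ∈ ((diffMatrix A).map Complex.ofReal).charpoly.roots, ‖z‖ < 1 := by
  have hA' : ∀ i, ∑ j, A.map Complex.ofRealHom i j = 1 := fun i => by
    simpa using congrArg Complex.ofReal (hA i)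
  rw [lam2abs, show A.map (Complex.ofReal ·) = A.map Complex.ofRealHom from rfl,
    charpoly_eq_charpoly_diffMatrix_mul_X_sub_one _ hA', diffMatrix_map, ← C_1,
    roots_mul (mul_ne_zero (charpoly_monic _).ne_zero (X_sub_C_ne_zero 1)), roots_X_sub_C,
    add_comm, Multiset.singleton_add, Multiset.erase_cons_head, Multiset.foldr_max_lt_iff]
  simp only [Multiset.forall_mem_map_iff, zero_lt_one, true_and]
  rfl

theorem deterministic_consensus_iff_lam2_lt_one_general {N : ℕ}
    (A : Matrix (Fin N) (Fin N) ℝ) (hA : IsStochastic A) :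
    (∀ x : Fin N → ℝ,
        Tendsto (fun t : ℕ => ⨆ i, ⨆ j, |(A ^ t).mulVec x i - (A ^ t).mulVec x j|)
          atTop (nhds 0)) ↔
      lam2abs A < 1 := by
  cases N with
  | zero => simp [lam2abs]
  | succ n =>
    have hpow (t : ℕ) :
        (diffMatrix A).map Complex.ofReal ^ t = (diffMatrix A ^ t).map Complex.ofReal :=
      (Matrix.map_pow _ Complex.ofRealHom t).symm
    rw [lam2abs_lt_one_iff hA.2, ← Matrix.tendsto_pow_atTop_nhds_zero_iff]
    simp_rw [hpow, Matrix.tendsto_map_ofReal_nhds_zero_iff]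
    exact tendsto_spread_pow_mulVec_iff hA.2

/-- Necessary and sufficient condition in the deterministic case:
a right stochastic matrix `A` reaches consensus
(`max_{i,j} |(A^t x)_i - (A^t x)_j| → 0` for all `x`) iff `|λ₂(A)| < 1`. -/
theorem deterministic_consensus_iff_lam2_lt_one {N : ℕ} (hN : 0 < N)
    (A : Matrix (Fin N) (Fin N) ℝ) (hA : IsStochastic A) :
    (∀ x : Fin N → ℝ,
        Tendsto (fun t : ℕ => ⨆ i, ⨆ j, |(A ^ t).mulVec x i - (A ^ t).mulVec x j|)
          atTop (nhds 0)) ↔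
      lam2abs A < 1 :=
  deterministic_consensus_iff_lam2_lt_one_general A hA
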